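/- Let S ⊆ ℝ be measurable, let x, x', w, w' ∈ ℝ^k, and assume all survival probabilities appearing below are strictly positive. Then log(1/α(w,x;S)) ≤ 2·log(1/α(w',x;S)) + |⟨w − w', x⟩|² + 2, and also log(1/α(w,x;S)) ≤ 2·log(1/α(w,x';S)) + |⟨w, x − x'⟩|² + 2. -/

import Mathlib

open MeasureTheory ProbabilityTheory Real
open scoped RealInnerProductSpace ENNReal

/-- The survival probability `α(μ; S) = N(μ,1)(S)`. -/
noncomputable def survival (μ : ℝ) (S : Set ℝ) : ℝ :=
  (gaussianReal μ 1 S).toReal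

/-- The truncated Gaussian `N(μ,1,S)`, i.e. `N(μ,1)` conditioned on `S`. -/
noncomputable def truncGaussian (μ : ℝ) (S : Set ℝ) : Measure ℝ :=
  (gaussianReal μ 1)[|S]

/-!
Let `ρ = exp (gaussianLogRatio μ μ' v)` be the density of `N(μ,v)` with respect to `N(μ',v)`.
Cauchy–Schwarz applied to `1 = √ρ · (√ρ)⁻¹` on `S` gives `N(μ',v)(S)² ≤ N(μ,v)(S) · ∫ ρ⁻¹ dN(μ',v)`, and `ρ⁻¹` is
`exp ((μ - μ')² / v)` times the density of `N(2μ' - μ, v)`, so the last integral equals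
`exp ((μ - μ')² / v)`. Taking logarithms gives the bound, even without the additive `2`.
-/

open scoped NNReal

theorem ENNReal.lintegral_mul_sq_le {α : Type*} [MeasurableSpace α] (ν : Measure α)
    {f g : α → ℝ≥0∞} (hf : AEMeasurable f ν) (hg : AEMeasurable g ν) :
    (∫⁻ a, f a * g a ∂ν) ^ 2 ≤ (∫⁻ a, f a ^ 2 ∂ν) * ∫⁻ a, g a ^ 2 ∂ν := by
  have h := ENNReal.rpow_le_rpow
    (ENNReal.lintegral_mul_le_Lp_mul_Lq ν Real.HolderConjugate.two_two hf hg) zero_le_two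
  have hsqrt : ∀ x : ℝ≥0∞, (x ^ (1 / 2 : ℝ)) ^ 2 = x := fun x => by
    rw [← ENNReal.rpow_natCast, ← ENNReal.rpow_mul]; norm_num
  simpa only [ENNReal.rpow_two, Pi.mul_apply, mul_pow, hsqrt] using h

theorem measure_univ_sq_le_lintegral_exp_mul_lintegral_exp_neg {α : Type*} [MeasurableSpace α]
    (ν : Measure α) {φ : α → ℝ} (hφ : Measurable φ) :
    ν Set.univ ^ 2 ≤
      (∫⁻ a, ENNReal.ofReal (exp (φ a)) ∂ν) * ∫⁻ a, ENNReal.ofReal (exp (-φ a)) ∂ν := by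
  have key := ENNReal.lintegral_mul_sq_le ν (f := fun a => ENNReal.ofReal (exp (φ a / 2)))
    (g := fun a => ENNReal.ofReal (exp (-φ a / 2))) (by fun_prop) (by fun_prop)
  have hsq : ∀ r : ℝ, ENNReal.ofReal (exp (r / 2)) ^ 2 = ENNReal.ofReal (exp r) := fun r => by
    rw [← ENNReal.ofReal_pow (exp_nonneg _), ← exp_nat_mul]; congr 2; ring
  simp only [hsq] at key
  simpa only [← ENNReal.ofReal_mul (exp_nonneg _), ← exp_add, neg_div, add_neg_cancel,
    exp_zero, ENNReal.ofReal_one, lintegral_one] using key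

noncomputable def gaussianLogRatio (μ μ' : ℝ) (v : ℝ≥0) (t : ℝ) : ℝ :=
  (μ - μ') * (t - μ') / v - (μ - μ') ^ 2 / (2 * v)

@[fun_prop]
lemma measurable_gaussianLogRatio (μ μ' : ℝ) (v : ℝ≥0) :
    Measurable (gaussianLogRatio μ μ' v) := by
  unfold gaussianLogRatio; fun_prop

lemma gaussianPDFReal_eq_exp_gaussianLogRatio_mul (μ μ' : ℝ) {v : ℝ≥0} (hv : v ≠ 0) (t : ℝ) :
    gaussianPDFReal μ v t = exp (gaussianLogRatio μ μ' v t) * gaussianPDFReal μ' v t := by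
  simp only [gaussianPDFReal, gaussianLogRatio]
  rw [mul_left_comm, ← exp_add]
  congr 2
  have : (v : ℝ) ≠ 0 := by exact_mod_cast hv
  field_simp
  ring

lemma neg_gaussianLogRatio (μ μ' : ℝ) (v : ℝ≥0) (t : ℝ) :
    -gaussianLogRatio μ μ' v t = gaussianLogRatio (2 * μ' - μ) μ' v t + (μ - μ') ^ 2 / v := by
  simp only [gaussianLogRatio]; ring

lemma gaussianReal_eq_withDensity_gaussianReal (μ μ' : ℝ) {v : ℝ≥0} (hv : v ≠ 0) :
    gaussianReal μ v =
      (gaussianReal μ' v).withDensity fun t => ENNReal.ofReal (exp (gaussianLogRatio μ μ' v t)) := by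
  rw [gaussianReal_of_var_ne_zero _ hv, gaussianReal_of_var_ne_zero _ hv,
    ← withDensity_mul _ (measurable_gaussianPDF _ _) (by fun_prop)]
  congr 1
  ext t
  simp only [Pi.mul_apply, gaussianPDF, ← ENNReal.ofReal_mul (gaussianPDFReal_nonneg _ _ _)]
  rw [gaussianPDFReal_eq_exp_gaussianLogRatio_mul μ μ' hv, mul_comm]

lemma lintegral_exp_neg_gaussianLogRatio (μ μ' : ℝ) {v : ℝ≥0} (hv : v ≠ 0) :
    ∫⁻ t, ENNReal.ofReal (exp (-gaussianLogRatio μ μ' v t)) ∂gaussianReal μ' v =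
      ENNReal.ofReal (exp ((μ - μ') ^ 2 / v)) := by
  simp_rw [neg_gaussianLogRatio, exp_add, ENNReal.ofReal_mul (exp_nonneg _)]
  rw [lintegral_mul_const' _ _ ENNReal.ofReal_ne_top, ← setLIntegral_univ,
    ← withDensity_apply _ MeasurableSet.univ, ← gaussianReal_eq_withDensity_gaussianReal _ _ hv,
    measure_univ, one_mul]

theorem gaussianReal_sq_le_mul_exp (μ μ' : ℝ) {v : ℝ≥0} (hv : v ≠ 0) (S : Set ℝ) :
    gaussianReal μ' v S ^ 2 ≤ gaussianReal μ v S * ENNReal.ofReal (exp ((μ - μ') ^ 2 / v)) := by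
  have hCS := measure_univ_sq_le_lintegral_exp_mul_lintegral_exp_neg
    ((gaussianReal μ' v).restrict S) (measurable_gaussianLogRatio μ μ' v)
  rw [Measure.restrict_apply_univ, ← withDensity_apply' _ S,
    ← gaussianReal_eq_withDensity_gaussianReal _ _ hv] at hCS
  calc gaussianReal μ' v S ^ 2 ≤ _ := hCS
    _ ≤ _ := by
      gcongr
      rw [← lintegral_exp_neg_gaussianLogRatio μ μ' hv]
      exact lintegral_mono' Measure.restrict_le_self le_rfl

theorem survival_sq_le_mul_exp (μ μ' : ℝ) (S : Set ℝ) :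
    survival μ' S ^ 2 ≤ survival μ S * exp ((μ - μ') ^ 2) := by
  have h := ENNReal.toReal_mono (by finiteness) (gaussianReal_sq_le_mul_exp μ μ' one_ne_zero S)
  simpa [survival, ENNReal.toReal_mul, ENNReal.toReal_ofReal (exp_nonneg _)] using h

theorem log_inv_survival_le {μ μ' : ℝ} {S : Set ℝ} (h : 0 < survival μ S)
    (h' : 0 < survival μ' S) :
    log (1 / survival μ S) ≤ 2 * log (1 / survival μ' S) + (μ - μ') ^ 2 := by
  have hlog := log_le_log (pow_pos h' 2) (survival_sq_le_mul_exp μ μ' S)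
  rw [log_pow, log_mul h.ne' (exp_ne_zero _), log_exp] at hlog
  simp only [one_div, log_inv]
  push_cast at hlog
  linarith

theorem stmt0 {k : ℕ} (S : Set ℝ)
    (x x' w w' : EuclideanSpace ℝ (Fin k))
    (h1 : 0 < survival ⟪w, x⟫ S)
    (h2 : 0 < survival ⟪w', x⟫ S)
    (h3 : 0 < survival ⟪w, x'⟫ S) :
    Real.log (1 / survival ⟪w, x⟫ S) ≤
        2 * Real.log (1 / survival ⟪w', x⟫ S) + |⟪w - w', x⟫| ^ 2 + 2 ∧
    Real.log (1 / survival ⟪w, x⟫ S) ≤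
        2 * Real.log (1 / survival ⟪w, x'⟫ S) + |⟪w, x - x'⟫| ^ 2 + 2 := by
  rw [sq_abs, sq_abs, inner_sub_left, inner_sub_right]
  exact ⟨by linarith [log_inv_survival_le h1 h2], by linarith [log_inv_survival_le h1 h3]⟩
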